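/- arXiv:2201.10213 — 2 statements merged into one kernel-verified Lean document; each statement's English description precedes it below -/
import Mathlib

section
/- In the gambler's ruin Markov chain G(p,q) with p ≤ q, for all states k and all n ∈ ℕ, the probability starting from k of avoiding state 0 during the first n steps is at most the corresponding probability starting from k+1. Consequently, this avoidance probability is monotonically non-decreasing in the starting state. -/
/-- `avoid p q k n` is the probability that the gambler's ruin walk
(right-step probability `p`, left-step probability `q`, absorbing state `0`)
started at state `k` does not visit state `0` at any of the times `0, 1, ..., n-1`. -/
def avoid (p q : ℝ) : ℕ → ℕ → ℝ
  | _, 0 => 1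
  | 0, _ + 1 => 0
  | k + 1, n + 1 => p * avoid p q (k + 2) n + q * avoid p q k n

lemma avoid_nonneg (p q : ℝ) (hp : 0 ≤ p) (hq : 0 ≤ q) :
    ∀ n k, 0 ≤ avoid p q k n := by
  intro n
  induction n with
  | zero => intro k; simp [avoid]
  | succ n ih =>
    intro k
    cases k with
    | zero => simp [avoid]
    | succ k =>
      have h1 := ih (k + 2)
      have h2 := ih k
      show 0 ≤ p * avoid p q (k + 2) n + q * avoid p q k n
      positivity

lemma avoid_step (p q : ℝ) (hp : 0 ≤ p) (hq : 0 ≤ q) :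
    ∀ n k, avoid p q k n ≤ avoid p q (k + 1) n := by
  intro n
  induction n with
  | zero => intro k; simp [avoid]
  | succ n ih =>
    intro k
    cases k with
    | zero =>
      show avoid p q 0 (n + 1) ≤ avoid p q 1 (n + 1)
      have : avoid p q 0 (n + 1) = 0 := by simp [avoid]
      rw [this]
      show (0 : ℝ) ≤ p * avoid p q 2 n + q * avoid p q 0 n
      have h1 := avoid_nonneg p q hp hq n 2
      have h2 := avoid_nonneg p q hp hq n 0
      positivity
    | succ k =>
      show p * avoid p q (k + 2) n + q * avoid p q k n ≤
        p * avoid p q (k + 3) n + q * avoid p q (k + 1) n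
      gcongr
      · exact ih (k + 2)
      · exact ih k

theorem stmt_8 (p q : ℝ) (hp : 0 < p) (hq : 0 < q) (hpq : p + q = 1) (hle : p ≤ q) :
    (∀ k n : ℕ, avoid p q k n ≤ avoid p q (k + 1) n) ∧
    (∀ n k₁ k₂ : ℕ, k₁ ≤ k₂ → avoid p q k₁ n ≤ avoid p q k₂ n) := by
  have step := avoid_step p q hp.le hq.le
  refine ⟨fun k n => step n k, fun n k₁ k₂ h => ?_⟩
  induction h with
  | refl => exact le_rfl
  | step _ ih => exact le_trans ih (step n _)
end

section
/- In the gambler's ruin Markov chain G(p,q) with p + q = 1, p, q > 0, the probability that the walk started at state 1 first reaches 0 at exactly step n equals (1/n)·C(n, (n+1)/2)·p^{(n-1)/2}·q^{(n+1)/2} when n is odd, and 0 when n is even. -/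
/-- `firstPassage p q k n` is the probability that the gambler's ruin walk
(right-step probability `p`, left-step probability `q`, absorbing state `0`)
started at state `k` first reaches state `0` at exactly step `n`. -/
def firstPassage (p q : ℝ) : ℕ → ℕ → ℝ
  | 0, 0 => 1
  | 0, _ + 1 => 0
  | _ + 1, 0 => 0
  | k + 1, n + 1 => p * firstPassage p q (k + 2) n + q * firstPassage p q k n

lemma fp_lt (p q : ℝ) : ∀ n k, n < k → firstPassage p q k n = 0 := by
  intro n
  induction n with
  | zero => intro k hk; obtain ⟨k, rfl⟩ := Nat.exists_eq_add_of_lt hk; simp [firstPassage]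
  | succ n ih =>
    intro k hk
    obtain ⟨k', rfl⟩ : ∃ k', k = k' + 1 := ⟨k - 1, by omega⟩
    rw [firstPassage, ih _ (by omega), ih _ (by omega)]
    ring

lemma fp_formula (p q : ℝ) : ∀ n k m, n = 2*m+k+1 →
    firstPassage p q (k+1) n =
      ((k+1 : ℝ)/(n : ℝ)) * ((n.choose m : ℕ) : ℝ) * p^m * q^(m+k+1) := by
  intro n
  induction n using Nat.strong_induction_on with
  | _ n ih =>
    intro k m hn
    subst hn
    rw [firstPassage]
    match k, m with
    | 0, 0 => simp [firstPassage]
    | 0, m + 1 =>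
      simp only [show (0+2 : ℕ) = 1+1 from rfl, show 2*(m+1)+0 = 2*m+1+1 from by omega,
        show 2*(m+1)+0+1 = 2*(m+1)+1 from by omega]
      rw [ih (2*m+1+1) (by omega) 1 m rfl, show (2*m+1+1 : ℕ) = (2*m+1)+1 from rfl,
        firstPassage]
      have hch := Nat.add_one_mul_choose_eq (2*m+1+1) m
      have hc : (2*(m:ℝ)+3) * (((2*m+1+1).choose m : ℕ) : ℝ)
          = (((2*m+1+1+1).choose (m+1) : ℕ) : ℝ) * ((m:ℝ)+1) := by
        exact_mod_cast hch
      have d1 : (2*(m:ℝ)+2) ≠ 0 := by positivity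
      have d2 : (2*(m:ℝ)+3) ≠ 0 := by positivity
      push_cast
      field_simp
      linear_combination (2 * p^(m+1) * q^(m+2)) * hc
    | k + 1, 0 =>
      simp only [show 2*0+(k+1) = k+1 from by omega, show 2*0+(k+1)+1 = k+2 from by omega]
      rw [fp_lt p q (k+1) (k+1+2) (by omega), ih (k+1) (by omega) k 0 (by omega)]
      have d1 : ((k:ℝ)+1) ≠ 0 := by positivity
      have d2 : ((k:ℝ)+2) ≠ 0 := by positivity
      push_cast
      simp [Nat.choose_zero_right]
      field_simp
      ring
    | k + 1, m + 1 =>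
      simp only [show 2*(m+1)+(k+1) = 2*m+(k+2)+1 from by omega,
        show (k+1+2 : ℕ) = (k+2)+1 from rfl]
      rw [ih (2*m+(k+2)+1) (by omega) (k+2) m rfl,
        ih (2*m+(k+2)+1) (by omega) k (m+1) (by omega)]
      have hP : (2*m+(k+2)+1+1).choose (m+1)
          = (2*m+(k+2)+1).choose m + (2*m+(k+2)+1).choose (m+1) :=
        Nat.choose_succ_succ _ _
      have hR := Nat.choose_succ_right_eq (2*m+(k+2)+1) m
      have hsub : (2*m+(k+2)+1) - m = m+k+3 := by omega
      rw [hsub] at hR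
      have hB : (((2*m+(k+2)+1).choose (m+1) : ℕ) : ℝ) * ((m:ℝ)+1)
          = (((2*m+(k+2)+1).choose m : ℕ) : ℝ) * ((m:ℝ)+(k:ℝ)+3) := by
        exact_mod_cast hR
      rw [hP]
      have d1 : (2*(m:ℝ)+(k:ℝ)+3) ≠ 0 := by positivity
      have d2 : (2*(m:ℝ)+(k:ℝ)+4) ≠ 0 := by positivity
      push_cast
      field_simp
      linear_combination (-2 * p^(m+1) * q^(m+k+3)) * hB

lemma fp_parity (p q : ℝ) : ∀ n k, (n + k) % 2 = 1 → firstPassage p q k n = 0 := by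
  intro n
  induction n with
  | zero => intro k hk
            obtain ⟨k', rfl⟩ : ∃ k', k = k' + 1 := ⟨k - 1, by omega⟩
            simp [firstPassage]
  | succ n ih =>
    intro k hk
    match k with
    | 0 => simp [firstPassage]
    | k + 1 =>
      rw [firstPassage, ih _ (by omega), ih _ (by omega)]
      ring

theorem stmt_9 (p q : ℝ) (hp : 0 < p) (hq : 0 < q) (hpq : p + q = 1) (n : ℕ) :
    firstPassage p q 1 n =
      if Odd n then
        (1 / (n : ℝ)) * (n.choose ((n + 1) / 2)) * p ^ ((n - 1) / 2) * q ^ ((n + 1) / 2)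
      else 0 := by
  rcases Nat.even_or_odd n with he | ho
  · rw [if_neg (by simpa using he)]
    have h2 : n % 2 = 0 := Nat.even_iff.mp he
    exact fp_parity p q n 1 (by omega)
  · obtain ⟨m, rfl⟩ := ho
    rw [if_pos ⟨m, rfl⟩]
    have hf := fp_formula p q (2*m+1) 0 m (by ring)
    simp only [show (2*m+1+1)/2 = m+1 from by omega, show (2*m+1-1)/2 = m from by omega]
    have hsym : (2*m+1).choose (m+1) = (2*m+1).choose m := by
      rw [← Nat.choose_symm (show m+1 ≤ 2*m+1 by omega)]
      congr 1
      omega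
    rw [hsym, show (0:ℕ)+1 = 1 from rfl] at *
    rw [hf]
    push_cast
    ring
end
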